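/- arXiv:1209.4580 — 2 statements merged into one kernel-verified Lean document; each statement's English description precedes it below -/
import Mathlib

section
/- Under the same hypotheses (b a monoid homomorphism to [1,∞), C² = ∑_α b_α^{-(q-p)} < ∞), the opposite-order convolution also satisfies ‖g ⊗ f‖_q ≤ C ‖f‖_p ‖g‖_q for f with ‖f‖_p < ∞ and g with ‖g‖_q < ∞. -/
/-!
Sum over the `|γ| + 1` factorisations `γ = αβ`. Cauchy–Schwarz with the weights
`b_β^{-(q-p)}` on the suffixes gives
`|(g ⊗ f)_γ|² ≤ (∑_{αβ=γ} b_β^{-(q-p)}) · ∑_{αβ=γ} |g_α|² |f_β|² b_β^{q-p}`,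
and the first factor is at most `C²` because distinct factorisations of `γ` have distinct
suffixes. Multiplying by `b_γ^{-q} = b_α^{-q} b_β^{-q}` and summing over `γ` turns the right
side into `C²` times the sum over all pairs `(α, β)`, that is `C² ‖g‖_q² ‖f‖_p²`.
-/

/-- The Wick product (monoid convolution) on the free monoid on ℕ:
`(f ⊗ g)_γ = ∑_{αβ = γ} f_α g_β`. -/
noncomputable def wick (f g : FreeMonoid ℕ → ℂ) (γ : FreeMonoid ℕ) : ℂ :=
  ∑ j ∈ Finset.range ((FreeMonoid.toList γ).length + 1),
    f (FreeMonoid.ofList ((FreeMonoid.toList γ).take j)) *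
      g (FreeMonoid.ofList ((FreeMonoid.toList γ).drop j))

open Finset

namespace FreeMonoid

variable {α : Type*}

-- `wick f g γ` is definitionally `∑ j ∈ range (|γ| + 1), f (γ.splitAt j).1 * g (γ.splitAt j).2`.
def splitAt (γ : FreeMonoid α) (j : ℕ) : FreeMonoid α × FreeMonoid α :=
  (ofList (γ.toList.take j), ofList (γ.toList.drop j))

theorem splitAt_fst_mul_snd (γ : FreeMonoid α) (j : ℕ) :
    (γ.splitAt j).1 * (γ.splitAt j).2 = γ := by
  simp [splitAt, ← ofList_append]

theorem injOn_splitAt_snd (γ : FreeMonoid α) :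
    Set.InjOn (fun j => (γ.splitAt j).2) (range (γ.toList.length + 1)) := by
  intro i hi j hj h
  have := congrArg (fun δ => δ.toList.length) h
  simp only [splitAt, toList_ofList, List.length_drop, coe_range, Set.mem_Iio] at this hi hj
  omega

theorem sum_splitAt_snd_le_tsum {φ : FreeMonoid α → ℝ} (hφ : Summable φ) (hφ0 : ∀ β, 0 ≤ φ β)
    (γ : FreeMonoid α) : ∑ j ∈ range (γ.toList.length + 1), φ (γ.splitAt j).2 ≤ ∑' β, φ β := by
  classical
  rw [← sum_image (f := φ) γ.injOn_splitAt_snd]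
  exact hφ.sum_le_tsum _ fun β _ => hφ0 β

def splitEquiv :
    FreeMonoid α × FreeMonoid α ≃ Σ γ : FreeMonoid α, Fin (γ.toList.length + 1) where
  toFun x := ⟨x.1 * x.2, ⟨x.1.toList.length, by simp⟩⟩
  invFun x := x.1.splitAt x.2
  left_inv := fun ⟨x, y⟩ => by simp [splitAt]
  right_inv := fun ⟨γ, j⟩ => by
    have h := splitAt_fst_mul_snd γ j
    refine Sigma.ext h ?_
    dsimp only
    rw [Fin.heq_ext_iff (by rw [h])]
    simp [splitAt, Nat.le_of_lt_succ j.2]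

theorem _root_.HasSum.sum_splitAt {M : Type*} [AddCommMonoid M] [TopologicalSpace M]
    [ContinuousAdd M] [RegularSpace M] {F : FreeMonoid α × FreeMonoid α → M} {a : M}
    (hF : HasSum F a) :
    HasSum (fun γ : FreeMonoid α => ∑ j ∈ range (γ.toList.length + 1), F (γ.splitAt j)) a :=
  (splitEquiv.symm.hasSum_iff.mpr hF).sigma fun γ => by
    show HasSum _ (∑ j ∈ range (γ.toList.length + 1), F (γ.splitAt j))
    rw [← Fin.sum_univ_eq_sum_range]
    exact hasSum_fintype _

end FreeMonoid

open FreeMonoid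

theorem norm_sq_wick_mul_zpow_le {b : FreeMonoid ℕ → ℝ} (hb : ∀ α, 0 < b α)
    (hbmul : ∀ α β, b (α * β) = b α * b β) {p q : ℤ}
    (hC : Summable fun α => b α ^ (-(q - p))) (f g : FreeMonoid ℕ → ℂ) (γ : FreeMonoid ℕ) :
    ‖wick g f γ‖ ^ 2 * b γ ^ (-q) ≤ (∑' α, b α ^ (-(q - p))) *
      ∑ j ∈ range (γ.toList.length + 1),
        ‖g (γ.splitAt j).1‖ ^ 2 * b (γ.splitAt j).1 ^ (-q) *
          (‖f (γ.splitAt j).2‖ ^ 2 * b (γ.splitAt j).2 ^ (-p)) := by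
  set s := range (γ.toList.length + 1)
  set a : ℕ → ℝ := fun j => ‖g (γ.splitAt j).1‖ * ‖f (γ.splitAt j).2‖
  set w : ℕ → ℝ := fun j => b (γ.splitAt j).2 ^ (-(q - p))
  have hw : ∀ j ∈ s, 0 < w j := fun j _ => zpow_pos (hb _) _
  have hnorm : ‖wick g f γ‖ ≤ ∑ j ∈ s, a j :=
    (norm_sum_le _ _).trans_eq (sum_congr rfl fun j _ => norm_mul _ _)
  have hcs : (∑ j ∈ s, a j) ^ 2 ≤ (∑ j ∈ s, w j) * ∑ j ∈ s, a j ^ 2 / w j :=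
    (div_le_iff₀' (sum_pos hw nonempty_range_add_one)).mp (sq_sum_div_le_sum_sq_div s a hw)
  have hwC : ∑ j ∈ s, w j ≤ ∑' α, b α ^ (-(q - p)) :=
    sum_splitAt_snd_le_tsum hC (fun α => (zpow_pos (hb α) _).le) γ
  have hterm (j : ℕ) : a j ^ 2 / w j * b γ ^ (-q) =
      ‖g (γ.splitAt j).1‖ ^ 2 * b (γ.splitAt j).1 ^ (-q) *
        (‖f (γ.splitAt j).2‖ ^ 2 * b (γ.splitAt j).2 ^ (-p)) := by
    have hbγ : b γ = b (γ.splitAt j).1 * b (γ.splitAt j).2 := by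
      rw [← hbmul, splitAt_fst_mul_snd]
    have hb₂ := (hb (γ.splitAt j).2).ne'
    have hbβ : b (γ.splitAt j).2 ^ (-q) =
        b (γ.splitAt j).2 ^ (-(q - p)) * b (γ.splitAt j).2 ^ (-p) := by
      rw [← zpow_add₀ hb₂]
      ring_nf
    simp only [a, w, hbγ, mul_zpow, hbβ]
    field_simp
  have hbγ : 0 ≤ b γ ^ (-q) := zpow_nonneg (hb γ).le _
  have hrest : 0 ≤ ∑ j ∈ s, a j ^ 2 / w j :=
    sum_nonneg fun j hj => div_nonneg (sq_nonneg _) (hw j hj).le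
  calc ‖wick g f γ‖ ^ 2 * b γ ^ (-q)
      ≤ (∑ j ∈ s, w j) * (∑ j ∈ s, a j ^ 2 / w j) * b γ ^ (-q) := by
        gcongr
        exact (pow_le_pow_left₀ (norm_nonneg _) hnorm 2).trans hcs
    _ ≤ (∑' α, b α ^ (-(q - p))) * (∑ j ∈ s, a j ^ 2 / w j) * b γ ^ (-q) := by gcongr
    _ = _ := by rw [mul_assoc, sum_mul]; simp only [hterm]

/-- Non-commutative Våge-type inequality (squared form). Let `b : ℓ̃ → [1,∞)` be a monoid
homomorphism and set `‖f‖_p² = ∑_α |f_α|² b_α^{-p}`. If `C² = ∑_α b_α^{-(q-p)} < ∞`, then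
for `f` with `‖f‖_p < ∞` and `g` with `‖g‖_q < ∞` one has
`‖g ⊗ f‖_q² ≤ C² ‖f‖_p² ‖g‖_q²`, i.e. `‖g ⊗ f‖_q ≤ C ‖f‖_p ‖g‖_q` (opposite order). -/
theorem vage_inequality_opposite (b : FreeMonoid ℕ → ℝ) (hb1 : ∀ α, 1 ≤ b α)
    (hbmul : ∀ α β, b (α * β) = b α * b β)
    (p q : ℤ) (hC : Summable (fun α : FreeMonoid ℕ => b α ^ (-(q - p))))
    (f g : FreeMonoid ℕ → ℂ)
    (hf : Summable (fun α => ‖f α‖ ^ 2 * b α ^ (-p)))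
    (hg : Summable (fun α => ‖g α‖ ^ 2 * b α ^ (-q))) :
    Summable (fun γ => ‖wick g f γ‖ ^ 2 * b γ ^ (-q)) ∧
      (∑' γ, ‖wick g f γ‖ ^ 2 * b γ ^ (-q)) ≤
        (∑' α : FreeMonoid ℕ, b α ^ (-(q - p))) *
          ((∑' α, ‖f α‖ ^ 2 * b α ^ (-p)) * ∑' α, ‖g α‖ ^ 2 * b α ^ (-q)) := by
  have hb : ∀ α, 0 < b α := fun α => one_pos.trans_le (hb1 α)
  have hweight_nonneg (h : FreeMonoid ℕ → ℂ) (r : ℤ) (α : FreeMonoid ℕ) :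
      0 ≤ ‖h α‖ ^ 2 * b α ^ (-r) :=
    mul_nonneg (sq_nonneg _) (zpow_nonneg (hb α).le _)
  have hsplit := (hg.hasSum.mul hf.hasSum
    (hg.mul_of_nonneg hf (hweight_nonneg g q) (hweight_nonneg f p))).sum_splitAt
  have hbound := norm_sq_wick_mul_zpow_le hb hbmul hC f g
  have hsum : Summable fun γ => ‖wick g f γ‖ ^ 2 * b γ ^ (-q) :=
    (hsplit.summable.mul_left _).of_nonneg_of_le (hweight_nonneg (wick g f) q) hbound
  refine ⟨hsum, ?_⟩
  calc _ ≤ _ := hsum.tsum_le_tsum hbound (hsplit.summable.mul_left _)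
    _ = _ := by rw [tsum_mul_left, hsplit.tsum_eq, mul_comm (∑' α, ‖g α‖ ^ 2 * _)]
end

section
/- E is the unique unital ℂ-algebra homomorphism from (S̃_{-1}, +, ⊗) to ℂ: if φ: S̃_{-1} → ℂ is multiplicative for the Wick product, additive, ℂ-linear, and φ(1) = 1, then φ(f) = E[f] for all f. -/
/-- Weight `(2ℕ)^α = ∏_k (2 i_k)` of a word (letter `i` represents `z_{i+1}`). -/
noncomputable def ncWeight (α : FreeMonoid ℕ) : ℝ :=
  (FreeMonoid.toList α |>.map (fun i => (2 * (i + 1) : ℝ))).prod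

/-- The unit for the Wick product: the indicator of the empty word. -/
noncomputable def wickUnit : FreeMonoid ℕ → ℂ :=
  fun γ => if FreeMonoid.toList γ = [] then 1 else 0

/-- Membership in the non-commutative Kondratiev space
`S̃₋₁ = ⋃_p L²(ℓ̃, μ_{-p})`. -/
def memS (f : FreeMonoid ℕ → ℂ) : Prop :=
  ∃ p : ℕ, Summable (fun α => ‖f α‖ ^ 2 * ncWeight α ^ (-(p : ℤ)))

/-!
Since `φ(1) = 1`, the element `k = f - φ(f)·1` satisfies `φ(k) = 0`. If `φ(f) ≠ f_1`, then
`k_1 ≠ 0` and `k` has a Wick inverse `h`, obtained by solving `(k ⊗ h)_γ = δ_{γ,1}` recursively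
in the length of `γ`; then `1 = φ(k ⊗ h) = φ(k) φ(h) = 0`. The analytic point is that `h` stays in
`S̃₋₁`: membership in `S̃₋₁` means a bound `|f_α| ≤ C (2ℕ)^{pα}`, the recursion only worsens this by
a factor `A^{|γ|} ≤ (2ℕ)^{tγ}`, and `∑_α (2ℕ)^{-2α} < ∞` because `∑_i (2(i+1))^{-2} = π²/24 < 1`.
-/

open Finset

lemma hasSum_pi_fin_prod {α : Type*} {r : α → ℝ} {s : ℝ} (hr : 0 ≤ r) (hs : HasSum r s)
    (n : ℕ) : HasSum (fun x : Fin n → α => ∏ i, r (x i)) (s ^ n) := by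
  induction n with
  | zero => simp
  | succ n ih =>
    have hnn : 0 ≤ fun x : Fin n → α => ∏ i, r (x i) := fun x => prod_nonneg fun i _ => hr (x i)
    have hsum := Summable.mul_of_nonneg hs.summable ih.summable hr hnn
    have hprod := hs.mul ih hsum
    rw [← (Fin.consEquiv fun _ => α).hasSum_iff, pow_succ']
    simpa [Function.comp_def, Fin.prod_univ_succ] using hprod

lemma summable_list_prod_map {α : Type*} {r : α → ℝ} {s : ℝ} (hr : 0 ≤ r) (hs : HasSum r s)
    (hs1 : s < 1) : Summable fun l : List α => (l.map r).prod := by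
  rw [← List.equivSigmaTuple.symm.summable_iff]
  have hpi := hasSum_pi_fin_prod hr hs
  refine (summable_sigma_of_nonneg fun x => ?_).2 ⟨fun n => ?_, ?_⟩
  · simpa [List.prod_ofFn] using prod_nonneg fun i _ => hr (x.2 i)
  · simpa [Function.comp_def, List.prod_ofFn] using (hpi n).summable
  · simpa [Function.comp_def, List.prod_ofFn, (hpi _).tsum_eq] using
      summable_geometric_of_lt_one (hs.nonneg hr) hs1

lemma ncWeight_one : ncWeight 1 = 1 := by simp [ncWeight]

lemma ncWeight_mul (α β : FreeMonoid ℕ) : ncWeight (α * β) = ncWeight α * ncWeight β := by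
  simp [ncWeight]

lemma ncWeight_of (i : ℕ) : ncWeight (FreeMonoid.of i) = 2 * (i + 1) := by simp [ncWeight]

lemma two_pow_length_le_ncWeight (α : FreeMonoid ℕ) : (2 : ℝ) ^ α.length ≤ ncWeight α := by
  induction α using FreeMonoid.inductionOn' with
  | one => simp [ncWeight_one]
  | of_mul i α ih =>
    rw [ncWeight_mul, ncWeight_of, FreeMonoid.length_mul, FreeMonoid.length_of, pow_add]
    gcongr
    simp

lemma one_le_ncWeight (α : FreeMonoid ℕ) : 1 ≤ ncWeight α :=
  (one_le_pow₀ one_le_two).trans (two_pow_length_le_ncWeight α)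

lemma ncWeight_pos (α : FreeMonoid ℕ) : 0 < ncWeight α := one_pos.trans_le (one_le_ncWeight α)

lemma hasSum_inv_two_mul_succ_sq :
    HasSum (fun i : ℕ => ((2 * ((i : ℝ) + 1)) ^ 2)⁻¹) (Real.pi ^ 2 / 24) := by
  have e (i : ℕ) : ((2 * ((i : ℝ) + 1)) ^ 2)⁻¹ = 1 / 4 * (1 / ((i + 1 : ℕ) : ℝ) ^ 2) := by
    push_cast; field_simp; ring
  rw [show Real.pi ^ 2 / 24 = 1 / 4 * (Real.pi ^ 2 / 6 - ∑ i ∈ range 1, 1 / (i : ℝ) ^ 2) by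
    norm_num; ring]
  simp_rw [e]
  exact ((hasSum_nat_add_iff' 1).mpr hasSum_zeta_two).mul_left (1 / 4)

lemma summable_inv_ncWeight_sq : Summable fun α : FreeMonoid ℕ => (ncWeight α ^ 2)⁻¹ := by
  have hlt : Real.pi ^ 2 / 24 < 1 := by nlinarith [Real.pi_lt_four, Real.pi_pos]
  rw [← FreeMonoid.ofList.summable_iff]
  convert summable_list_prod_map (fun i => by positivity) hasSum_inv_two_mul_succ_sq hlt with l
  induction l with
  | nil => simp [ncWeight]
  | cons i l ih =>
    rw [Function.comp_apply, FreeMonoid.ofList_cons, ncWeight_mul, ncWeight_of] at *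
    rw [List.map_cons, List.prod_cons, ← ih, mul_pow, mul_inv]

lemma memS_iff_exists_norm_le {f : FreeMonoid ℕ → ℂ} :
    memS f ↔ ∃ (C : ℝ) (p : ℕ), ∀ α, ‖f α‖ ≤ C * ncWeight α ^ p := by
  constructor
  · rintro ⟨p, hp⟩
    refine ⟨1 + ∑' α, ‖f α‖ ^ 2 * ncWeight α ^ (-(p : ℤ)), p, fun α => ?_⟩
    have hW := ncWeight_pos α
    have hterm : ‖f α‖ ^ 2 ≤ (∑' α, ‖f α‖ ^ 2 * ncWeight α ^ (-(p : ℤ))) * ncWeight α ^ p := by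
      have := hp.le_tsum α fun β _ => by have := ncWeight_pos β; positivity
      rwa [zpow_neg, zpow_natCast, ← div_eq_mul_inv, div_le_iff₀ (by positivity)] at this
    have : 1 ≤ ncWeight α ^ p := one_le_pow₀ (one_le_ncWeight α)
    -- `‖f α‖ ≤ 1 + ‖f α‖ ^ 2`
    nlinarith [norm_nonneg (f α)]
  · rintro ⟨C, p, hC⟩
    refine ⟨2 * p + 2, (summable_inv_ncWeight_sq.mul_left (C ^ 2)).of_nonneg_of_le
      (fun α => by have := ncWeight_pos α; positivity) fun α => ?_⟩
    have hW := ncWeight_pos α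
    calc ‖f α‖ ^ 2 * ncWeight α ^ (-((2 * p + 2 : ℕ) : ℤ))
        ≤ (C * ncWeight α ^ p) ^ 2 * ncWeight α ^ (-((2 * p + 2 : ℕ) : ℤ)) := by
          gcongr; exact hC α
      _ = C ^ 2 * (ncWeight α ^ 2)⁻¹ := by
          rw [zpow_neg, zpow_natCast]; field_simp; ring

lemma nonneg_of_forall_norm_le {f : FreeMonoid ℕ → ℂ} {C : ℝ} {p : ℕ}
    (hf : ∀ α, ‖f α‖ ≤ C * ncWeight α ^ p) : 0 ≤ C := by
  simpa [ncWeight_one] using (norm_nonneg _).trans (hf 1)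

lemma memS_add {f g : FreeMonoid ℕ → ℂ} (hf : memS f) (hg : memS g) :
    memS fun γ => f γ + g γ := by
  obtain ⟨C₁, p₁, hf⟩ := memS_iff_exists_norm_le.1 hf
  obtain ⟨C₂, p₂, hg⟩ := memS_iff_exists_norm_le.1 hg
  refine memS_iff_exists_norm_le.2 ⟨C₁ + C₂, p₁ + p₂, fun α => ?_⟩
  have hW := one_le_ncWeight α
  have h₁ : ncWeight α ^ p₁ ≤ ncWeight α ^ (p₁ + p₂) := pow_le_pow_right₀ hW (by omega)
  have h₂ : ncWeight α ^ p₂ ≤ ncWeight α ^ (p₁ + p₂) := pow_le_pow_right₀ hW (by omega)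
  calc ‖f α + g α‖ ≤ C₁ * ncWeight α ^ p₁ + C₂ * ncWeight α ^ p₂ :=
        (norm_add_le _ _).trans (add_le_add (hf α) (hg α))
    _ ≤ (C₁ + C₂) * ncWeight α ^ (p₁ + p₂) := by
        rw [add_mul]
        gcongr
        exacts [nonneg_of_forall_norm_le hf, nonneg_of_forall_norm_le hg]

lemma memS_const_mul (c : ℂ) {f : FreeMonoid ℕ → ℂ} (hf : memS f) : memS fun γ => c * f γ := by
  obtain ⟨C, p, hf⟩ := memS_iff_exists_norm_le.1 hf
  refine memS_iff_exists_norm_le.2 ⟨‖c‖ * C, p, fun α => ?_⟩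
  rw [norm_mul, mul_assoc]
  exact mul_le_mul_of_nonneg_left (hf α) (norm_nonneg c)

lemma memS_wickUnit : memS wickUnit := by
  refine memS_iff_exists_norm_le.2 ⟨1, 0, fun α => ?_⟩
  unfold wickUnit
  split_ifs <;> simp

noncomputable def wickInv (k : FreeMonoid ℕ → ℂ) : List ℕ → ℂ
  | [] => (k 1)⁻¹
  | a :: l => -(k 1)⁻¹ * ∑ j ∈ range (l.length + 1),
      k (FreeMonoid.ofList (a :: l.take j)) * wickInv k (l.drop j)
termination_by l => l.length

lemma wick_wickInv (k : FreeMonoid ℕ → ℂ) (hk : k 1 ≠ 0) :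
    wick k (fun γ => wickInv k γ.toList) = wickUnit := by
  funext γ
  rw [wick, wickUnit]
  rcases γ.toList with _ | ⟨a, l⟩
  · simp [wickInv, hk]
  · rw [sum_range_succ']
    simp [wickInv, hk]

lemma ncWeight_cons_take_mul_drop (a : ℕ) (l : List ℕ) (j : ℕ) :
    ncWeight (FreeMonoid.ofList (a :: l.take j)) * ncWeight (FreeMonoid.ofList (l.drop j)) =
      ncWeight (FreeMonoid.ofList (a :: l)) := by
  rw [← ncWeight_mul, ← FreeMonoid.ofList_append, List.cons_append, List.take_append_drop]

lemma norm_wickInv_le {k : FreeMonoid ℕ → ℂ} {C : ℝ} {p : ℕ}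
    (hk : ∀ α, ‖k α‖ ≤ C * ncWeight α ^ p) (l : List ℕ) :
    ‖wickInv k l‖ ≤
      ‖k 1‖⁻¹ * (‖k 1‖⁻¹ * C + 1) ^ l.length * ncWeight (FreeMonoid.ofList l) ^ p := by
  have hC := nonneg_of_forall_norm_le hk
  have hW (α : FreeMonoid ℕ) : 0 ≤ ncWeight α ^ p := pow_nonneg (ncWeight_pos α).le p
  set c := ‖k 1‖⁻¹
  set A := c * C + 1
  induction l using wickInv.induct with
  | case1 => simp [wickInv, c, ncWeight_one]
  | case2 a l ih =>
    have hreflect : ∑ j ∈ range (l.length + 1), A ^ (l.length - j) =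
        ∑ m ∈ range (l.length + 1), A ^ m := by
      simpa using sum_range_reflect (fun m => A ^ m) (l.length + 1)
    calc ‖wickInv k (a :: l)‖
        ≤ c * ∑ j ∈ range (l.length + 1),
            ‖k (FreeMonoid.ofList (a :: l.take j))‖ * ‖wickInv k (l.drop j)‖ := by
          rw [wickInv, norm_mul, norm_neg, norm_inv]
          gcongr
          exact (norm_sum_le _ _).trans_eq (by simp_rw [norm_mul])
      _ ≤ c * ∑ j ∈ range (l.length + 1),
            C * ncWeight (FreeMonoid.ofList (a :: l.take j)) ^ p *
              (c * A ^ (l.length - j) * ncWeight (FreeMonoid.ofList (l.drop j)) ^ p) := by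
          refine mul_le_mul_of_nonneg_left (sum_le_sum fun j _ => ?_) (by positivity)
          exact mul_le_mul (hk _) (by simpa using ih j) (norm_nonneg _) (mul_nonneg hC (hW _))
      _ = c * (c * C) * (∑ j ∈ range (l.length + 1), A ^ (l.length - j)) *
            ncWeight (FreeMonoid.ofList (a :: l)) ^ p := by
          rw [mul_sum, mul_sum, sum_mul]
          refine sum_congr rfl fun j _ => ?_
          rw [← ncWeight_cons_take_mul_drop a l j, mul_pow]
          ring
      _ ≤ c * A ^ (a :: l).length * ncWeight (FreeMonoid.ofList (a :: l)) ^ p := by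
          have hgeom : c * C * ∑ m ∈ range (l.length + 1), A ^ m ≤ A ^ (l.length + 1) := by
            linarith [geom_sum_mul_add (c * C) (l.length + 1)]
          rw [hreflect, mul_assoc c]
          exact mul_le_mul_of_nonneg_right (mul_le_mul_of_nonneg_left hgeom (by positivity)) (hW _)

lemma exists_memS_wick_eq_wickUnit {k : FreeMonoid ℕ → ℂ} (hk : memS k) (hk1 : k 1 ≠ 0) :
    ∃ h, memS h ∧ wick k h = wickUnit := by
  obtain ⟨C, p, hC⟩ := memS_iff_exists_norm_le.1 hk
  set A := ‖k 1‖⁻¹ * C + 1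
  have hA : 0 ≤ A := by have := nonneg_of_forall_norm_le hC; positivity
  obtain ⟨t, ht⟩ := pow_unbounded_of_one_lt A one_lt_two
  refine ⟨fun γ => wickInv k γ.toList,
    memS_iff_exists_norm_le.2 ⟨‖k 1‖⁻¹, t + p, fun γ => ?_⟩, wick_wickInv k hk1⟩
  have hAW : A ^ γ.length ≤ ncWeight γ ^ t :=
    calc A ^ γ.length ≤ ((2 : ℝ) ^ t) ^ γ.length := pow_le_pow_left₀ hA ht.le _
      _ = ((2 : ℝ) ^ γ.length) ^ t := by rw [← pow_mul, ← pow_mul, mul_comm]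
      _ ≤ ncWeight γ ^ t := pow_le_pow_left₀ (by positivity) (two_pow_length_le_ncWeight γ) t
  calc ‖wickInv k γ.toList‖ ≤ ‖k 1‖⁻¹ * A ^ γ.length * ncWeight γ ^ p :=
        (norm_wickInv_le hC γ.toList).trans_eq (by rw [FreeMonoid.ofList_toList]; rfl)
    _ ≤ ‖k 1‖⁻¹ * ncWeight γ ^ t * ncWeight γ ^ p :=
        mul_le_mul_of_nonneg_right (mul_le_mul_of_nonneg_left hAW (by positivity))
          (pow_nonneg (ncWeight_pos γ).le p)
    _ = ‖k 1‖⁻¹ * ncWeight γ ^ (t + p) := by ring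

/-- `E` is the unique unital `ℂ`-algebra homomorphism `(S̃₋₁, +, ⊗) → ℂ`: if `φ` is
additive, `ℂ`-homogeneous and multiplicative for the Wick product on elements of `S̃₋₁`,
and `φ(1) = 1`, then `φ(f) = E[f] = f_1` for every `f ∈ S̃₋₁`. -/
theorem expectation_unique_hom (φ : (FreeMonoid ℕ → ℂ) → ℂ)
    (hadd : ∀ f g, memS f → memS g → φ (fun γ => f γ + g γ) = φ f + φ g)
    (hsmul : ∀ (c : ℂ) f, memS f → φ (fun γ => c * f γ) = c * φ f)
    (hmul : ∀ f g, memS f → memS g → φ (wick f g) = φ f * φ g)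
    (hone : φ wickUnit = 1) :
    ∀ f, memS f → φ f = f 1 := by
  intro f hf
  by_contra hne
  have hunit : memS fun γ => -φ f * wickUnit γ := memS_const_mul _ memS_wickUnit
  set k : FreeMonoid ℕ → ℂ := fun γ => f γ + -φ f * wickUnit γ
  have hk : memS k := memS_add hf hunit
  have hφk : φ k = 0 := by
    rw [hadd f _ hf hunit, hsmul _ _ memS_wickUnit, hone]
    ring
  have hk1 : k 1 ≠ 0 := by
    simpa [k, wickUnit, ← sub_eq_add_neg, sub_eq_zero] using Ne.symm hne
  obtain ⟨h, hh, hkh⟩ := exists_memS_wick_eq_wickUnit hk hk1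
  have := hmul k h hk hh
  rw [hkh, hone, hφk, zero_mul] at this
  exact one_ne_zero this
end
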